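/- Let G be a finite group and H, K ≤ G subgroups with inclusions i: H → G and j: K → G. Then the isocomma groupoid (i/j) is equivalent to the disjoint union, over a set of representatives x of the double cosets K\G/H, of the groups K ∩ xHx⁻¹ (viewed as one-object groupoids). -/

import Mathlib

/-!
An object of the isocomma groupoid is an element `g : G`, and a morphism `g ⟶ g'` is a pair
`(h, k) ∈ H × K` with `g' h = k g`. Hence `g'` is isomorphic to `g` exactly when `g' ∈ KgH`, and
the automorphisms of `r` are the pairs `(r⁻¹ k r, k)` with `k ∈ K ∩ rHr⁻¹`. Sending the component
of a representative `r` to the object `r` is therefore essentially surjective and fully faithful,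
since distinct representatives lie in distinct double cosets and so admit no morphisms between them.
-/

open CategoryTheory

namespace CategoryTheory.Sigma

variable {I : Type*} {C : I → Type*} [∀ i, Category (C i)] {D : Type*} [Category D]
  (F : ∀ i, C i ⥤ D)

instance faithful_desc [∀ i, (F i).Faithful] : (desc F).Faithful where
  map_injective {X Y} f g h := by
    change SigmaHom X Y at f g
    cases f with
    | mk f =>
      cases g with
      | mk g =>
        rw [desc_map_mk, desc_map_mk] at h
        rw [(F _).map_injective h]

lemma full_desc [∀ i, (F i).Full]
    (hF : ∀ i j (X : C i) (Y : C j), Nonempty ((F i).obj X ⟶ (F j).obj Y) → i = j) :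
    (desc F).Full where
  map_surjective {X Y} φ := by
    obtain ⟨i, X⟩ := X
    obtain ⟨j, Y⟩ := Y
    obtain rfl := hF i j X Y ⟨φ⟩
    change (F i).obj X ⟶ (F i).obj Y at φ
    exact ⟨SigmaHom.mk ((F i).preimage φ), by rw [desc_map_mk, Functor.map_preimage]⟩

end CategoryTheory.Sigma

section

variable {G : Type*} [Group G] (H K : Subgroup G)

lemma Subgroup.mem_inf_map_conj_iff {r u : G} :
    u ∈ K ⊓ H.map (MulAut.conj r).toMonoidHom ↔ u ∈ K ∧ r⁻¹ * u * r ∈ H := by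
  rw [mem_inf, mem_map_equiv, MulAut.conj_symm_apply]

abbrev IsoComma :=
  Comma (SingleObj.mapHom H G H.subtype) (SingleObj.mapHom K G K.subtype)

namespace IsoComma

def ofElem (g : G) : IsoComma H K :=
  ⟨SingleObj.star H, SingleObj.star K, g⟩

variable {H K}

lemma hom_mem_doubleCoset {X Y : IsoComma H K} (φ : X ⟶ Y) :
    (Y.hom : G) ∈ DoubleCoset.doubleCoset (X.hom : G) (K : Set G) (H : Set G) := by
  let h : H := φ.left
  let k : K := φ.right
  have hw : (Y.hom : G) * h = k * X.hom := φ.w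
  refine DoubleCoset.mem_doubleCoset.mpr ⟨k, k.2, (h : G)⁻¹, H.inv_mem h.2, ?_⟩
  rw [← hw]
  group

lemma nonempty_ofElem_iso {r : G} (X : IsoComma H K)
    (hX : (X.hom : G) ∈ DoubleCoset.doubleCoset r (K : Set G) (H : Set G)) :
    Nonempty (ofElem H K r ≅ X) := by
  obtain ⟨k, hk, h, hh, hX⟩ := DoubleCoset.mem_doubleCoset.mp hX
  refine ⟨Comma.isoMk ((Groupoid.isoEquivHom _ _).symm (⟨h⁻¹, H.inv_mem hh⟩ : H))
    ((Groupoid.isoEquivHom _ _).symm (⟨k, hk⟩ : K)) ?_⟩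
  change (X.hom : G) * h⁻¹ = k * r
  rw [hX]
  group

def endMk (r : G) (u : ↥(K ⊓ H.map (MulAut.conj r).toMonoidHom)) : ofElem H K r ⟶ ofElem H K r :=
  { left := (⟨r⁻¹ * u * r, ((H.mem_inf_map_conj_iff K).1 u.2).2⟩ : H)
    right := (⟨u, u.2.1⟩ : K)
    w := show r * (r⁻¹ * u * r) = u * r by group }

lemma endMk_one (r : G) : endMk r 1 = 𝟙 (ofElem H K r) := by
  ext
  · exact Subtype.ext (show r⁻¹ * 1 * r = 1 by group)
  · rfl

lemma endMk_mul (r : G) (u v : ↥(K ⊓ H.map (MulAut.conj r).toMonoidHom)) :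
    endMk r (v * u) = endMk r u ≫ endMk r v := by
  ext
  · exact Subtype.ext (show r⁻¹ * (v * u : G) * r = (r⁻¹ * v * r) * (r⁻¹ * u * r) by group)
  · rfl

lemma endMk_injective (r : G) : Function.Injective (endMk (H := H) (K := K) r) :=
  fun _ _ h => Subtype.ext (congrArg (fun φ => ((φ.right : K) : G)) h)

lemma endMk_surjective (r : G) : Function.Surjective (endMk (H := H) (K := K) r) := by
  intro φ
  let h : H := φ.left
  let k : K := φ.right
  have hw : r * h = k * r := φ.w
  have hkr : r⁻¹ * k * r = h := by rw [mul_assoc, ← hw]; group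
  refine ⟨⟨k, (H.mem_inf_map_conj_iff K).2 ⟨k.2, hkr ▸ h.2⟩⟩, ?_⟩
  ext
  · exact Subtype.ext hkr
  · rfl

variable (H K)

def toComma (r : G) :
    SingleObj ↥(K ⊓ H.map (MulAut.conj r).toMonoidHom) ⥤ IsoComma H K where
  obj _ := ofElem H K r
  map u := endMk r u
  map_id _ := endMk_one r
  map_comp u v := endMk_mul r u v

instance (r : G) : (toComma H K r).Faithful where
  map_injective h := endMk_injective r h

instance (r : G) : (toComma H K r).Full where
  map_surjective φ := endMk_surjective r φ

end IsoComma

end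

open IsoComma in
theorem statement0 (G : Type*) [Group G] (H K : Subgroup G)
    (R : Finset G)
    (hR : ∀ g : G, ∃! r, r ∈ R ∧ g ∈ DoubleCoset.doubleCoset r (K : Set G) (H : Set G)) :
    Nonempty
      (Comma (SingleObj.mapHom H G H.subtype) (SingleObj.mapHom K G K.subtype) ≌
        (Σ r : {x // x ∈ R},
          SingleObj (K ⊓ Subgroup.map (MulAut.conj (r : G)).toMonoidHom H : Subgroup G))) := by
  let F := Sigma.desc fun r : {x // x ∈ R} => toComma H K r
  have : F.Full := Sigma.full_desc _ fun r r' _ _ ⟨φ⟩ => Subtype.ext <|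
    (hR r').unique ⟨r.2, hom_mem_doubleCoset φ⟩ ⟨r'.2, DoubleCoset.mem_doubleCoset_self _ _ _⟩
  have : F.EssSurj := ⟨fun X => by
    obtain ⟨r, ⟨hrR, hX⟩, -⟩ := hR X.hom
    exact ⟨⟨⟨r, hrR⟩, SingleObj.star _⟩, nonempty_ofElem_iso X hX⟩⟩
  have : F.IsEquivalence := {}
  exact ⟨F.asEquivalence.symm⟩
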